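/- Two-sided sandwich for the budgeted fixed point: for all s, a, and b ∈ {0,...,B}, Q^μ(s,a) ≤ Q*(s,b,a) ≤ Q^⋆(s,a), where Q^μ is the behavior-policy evaluation fixed point and Q^⋆ is the unconstrained optimal Q fixed point. -/

import Mathlib

/-!
Both inequalities are comparison principles for γ-contractions. If `D` is the largest gap
`Q^μ - Q*` (resp. `Q* - Q^⋆`) over all state-budget-action triples, then one Bellman backup
turns every gap into γ times an average of gaps at the successor states, because
`E_μ[Q*(s', b, ·)] ≤ V_{Q*}(s', b)` (resp. `V_{Q*}(s', b) ≤ max_a Q^⋆(s', a) + D`). Hence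
`D ≤ γ D`, and `γ < 1` forces `D ≤ 0`.
-/

open Finset

/-- Expectation of `f` under a (finitely supported) distribution `p` on a finite type. -/
noncomputable def expct {A : Type*} [Fintype A] (p : A → ℝ) (f : A → ℝ) : ℝ :=
  ∑ a, p a * f a

/-- Maximum of a real-valued function on a finite nonempty type. -/
noncomputable def amax {A : Type*} [Fintype A] [Nonempty A] (f : A → ℝ) : ℝ :=
  Finset.univ.sup' Finset.univ_nonempty f

/-- The counterfactual-budgeting value `V_Q(s, b)`. -/
noncomputable def VQ {S A : Type*} [Fintype A] [Nonempty A] {B : ℕ}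
    (μ : S → A → ℝ) (Q : S → Fin (B + 1) → A → ℝ) (s : S) (b : Fin (B + 1)) : ℝ :=
  if _ : (b : ℕ) = 0 then expct (μ s) (Q s b)
  else max (amax (Q s ⟨(b : ℕ) - 1, lt_of_le_of_lt (Nat.sub_le _ _) b.isLt⟩))
           (expct (μ s) (Q s b))

/-- The counterfactual-budgeting Bellman operator `T`. -/
noncomputable def TCB {S A : Type*} [Fintype S] [Fintype A] [Nonempty A] {B : ℕ}
    (γ : ℝ) (r : S → A → ℝ) (P : S → A → S → ℝ) (μ : S → A → ℝ)
    (Q : S → Fin (B + 1) → A → ℝ) : S → Fin (B + 1) → A → ℝ :=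
  fun s b a => r s a + γ * ∑ s', P s a s' * VQ μ Q s' b

/-- Sup norm over state-budget-action triples. -/
noncomputable def supNorm3 {S A : Type*} [Fintype S] [Nonempty S] [Fintype A] [Nonempty A]
    {B : ℕ} (Q : S → Fin (B + 1) → A → ℝ) : ℝ :=
  Finset.univ.sup' Finset.univ_nonempty
    (fun x : S × Fin (B + 1) × A => |Q x.1 x.2.1 x.2.2|)

/-- Sup norm over state-budget pairs. -/
noncomputable def supNorm2 {S : Type*} [Fintype S] [Nonempty S]
    {B : ℕ} (V : S → Fin (B + 1) → ℝ) : ℝ :=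
  Finset.univ.sup' Finset.univ_nonempty (fun x : S × Fin (B + 1) => |V x.1 x.2|)

/-- Sup norm over state-action pairs. -/
noncomputable def supNormSA {S A : Type*} [Fintype S] [Nonempty S] [Fintype A] [Nonempty A]
    (Q : S → A → ℝ) : ℝ :=
  Finset.univ.sup' Finset.univ_nonempty (fun x : S × A => |Q x.1 x.2|)

lemma nonpos_of_forall_le_mul {ι : Type*} [Finite ι] {γ : ℝ} (hγ : γ < 1) {u : ι → ℝ}
    (h : ∀ c, (∀ i, u i ≤ c) → ∀ i, u i ≤ γ * c) (i : ι) : u i ≤ 0 := by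
  have : Nonempty ι := ⟨i⟩
  obtain ⟨i₀, hi₀⟩ := Finite.exists_max u
  have hmax : u i₀ ≤ γ * u i₀ := h (u i₀) hi₀ i₀
  nlinarith [hi₀ i]

section Expectation

variable {X : Type*} [Fintype X] {p : X → ℝ}

lemma expct_le_of_forall_le (hp0 : ∀ x, 0 ≤ p x) (hp1 : ∑ x, p x = 1) {f : X → ℝ} {c : ℝ}
    (h : ∀ x, f x ≤ c) : expct p f ≤ c :=
  calc expct p f ≤ ∑ x, p x * c := sum_le_sum fun x _ => mul_le_mul_of_nonneg_left (h x) (hp0 x)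
    _ = c := by rw [← sum_mul, hp1, one_mul]

lemma expct_sub_expct_le (hp0 : ∀ x, 0 ≤ p x) (hp1 : ∑ x, p x = 1) {f g : X → ℝ} {c : ℝ}
    (h : ∀ x, f x - g x ≤ c) : expct p f - expct p g ≤ c := by
  have hsub : expct p f - expct p g = expct p (fun x => f x - g x) := by
    simp only [expct, mul_sub, sum_sub_distrib]
  exact hsub ▸ expct_le_of_forall_le hp0 hp1 h

lemma bellman_sub_le {γ : ℝ} (hγ : 0 ≤ γ) (hp0 : ∀ x, 0 ≤ p x) (hp1 : ∑ x, p x = 1)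
    (ρ : ℝ) {v w : X → ℝ} {c : ℝ} (h : ∀ x, v x - w x ≤ c) :
    (ρ + γ * ∑ x, p x * v x) - (ρ + γ * ∑ x, p x * w x) ≤ γ * c :=
  calc (ρ + γ * ∑ x, p x * v x) - (ρ + γ * ∑ x, p x * w x) = γ * (expct p v - expct p w) := by
        unfold expct; ring
    _ ≤ γ * c := mul_le_mul_of_nonneg_left (expct_sub_expct_le hp0 hp1 h) hγ

end Expectation

lemma le_amax {A : Type*} [Fintype A] [Nonempty A] (f : A → ℝ) (a : A) : f a ≤ amax f :=
  le_sup' f (mem_univ a)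

section BudgetValue

variable {S A : Type*} [Fintype A] [Nonempty A] {B : ℕ}
  {μ : S → A → ℝ} {Q : S → Fin (B + 1) → A → ℝ}

lemma expct_le_VQ (s : S) (b : Fin (B + 1)) : expct (μ s) (Q s b) ≤ VQ μ Q s b := by
  unfold VQ
  split_ifs
  · exact le_rfl
  · exact le_max_right _ _

lemma VQ_le_of_forall_le {s : S} (hμ0 : ∀ a, 0 ≤ μ s a) (hμ1 : ∑ a, μ s a = 1) {m : ℝ}
    (h : ∀ b a, Q s b a ≤ m) (b : Fin (B + 1)) : VQ μ Q s b ≤ m := by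
  have hexp : expct (μ s) (Q s b) ≤ m := expct_le_of_forall_le hμ0 hμ1 (h b)
  unfold VQ
  split_ifs
  · exact hexp
  · exact max_le (sup'_le _ _ fun a _ => h _ a) hexp

end BudgetValue

section FixedPoints

variable {S A : Type*} [Fintype S] [Fintype A] [Nonempty A] {B : ℕ}
  {γ : ℝ} {r : S → A → ℝ} {P : S → A → S → ℝ} {μ : S → A → ℝ} {Qst : S → Fin (B + 1) → A → ℝ}

lemma evaluation_sub_fixedPoint_le (hγ0 : 0 ≤ γ)
    (hP0 : ∀ s a s', 0 ≤ P s a s') (hP1 : ∀ s a, ∑ s', P s a s' = 1)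
    (hμ0 : ∀ s a, 0 ≤ μ s a) (hμ1 : ∀ s, ∑ a, μ s a = 1) (hQst : TCB γ r P μ Qst = Qst)
    {Qmu : S → A → ℝ} (hQmu : ∀ s a, Qmu s a = r s a + γ * ∑ s', P s a s' * expct (μ s') (Qmu s'))
    {c : ℝ} (hc : ∀ s b a, Qmu s a - Qst s b a ≤ c) (s : S) (b : Fin (B + 1)) (a : A) :
    Qmu s a - Qst s b a ≤ γ * c := by
  rw [hQmu s a, ← congrFun₃ hQst s b a]
  refine bellman_sub_le hγ0 (hP0 s a) (hP1 s a) (r s a) fun s' => ?_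
  have hgap : expct (μ s') (Qmu s') - expct (μ s') (Qst s' b) ≤ c :=
    expct_sub_expct_le (hμ0 s') (hμ1 s') (hc s' b)
  linarith [expct_le_VQ (μ := μ) (Q := Qst) s' b]

lemma fixedPoint_sub_optimal_le (hγ0 : 0 ≤ γ)
    (hP0 : ∀ s a s', 0 ≤ P s a s') (hP1 : ∀ s a, ∑ s', P s a s' = 1)
    (hμ0 : ∀ s a, 0 ≤ μ s a) (hμ1 : ∀ s, ∑ a, μ s a = 1) (hQst : TCB γ r P μ Qst = Qst)
    {Qopt : S → A → ℝ} (hQopt : ∀ s a, Qopt s a = r s a + γ * ∑ s', P s a s' * amax (Qopt s'))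
    {c : ℝ} (hc : ∀ s b a, Qst s b a - Qopt s a ≤ c) (s : S) (b : Fin (B + 1)) (a : A) :
    Qst s b a - Qopt s a ≤ γ * c := by
  rw [hQopt s a, ← congrFun₃ hQst s b a]
  refine bellman_sub_le hγ0 (hP0 s a) (hP1 s a) (r s a) fun s' => ?_
  have hV : VQ μ Qst s' b ≤ amax (Qopt s') + c :=
    VQ_le_of_forall_le (hμ0 s') (hμ1 s') (fun b' a' => by
      linarith [hc s' b' a', le_amax (Qopt s') a']) b
  linarith

end FixedPoints

theorem fixedPoint_sandwich_general {S A : Type*} [Fintype S] [Fintype A] [Nonempty A] {B : ℕ}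
    (γ : ℝ) (hγ0 : 0 ≤ γ) (hγ1 : γ < 1)
    (r : S → A → ℝ)
    (P : S → A → S → ℝ) (hP0 : ∀ s a s', 0 ≤ P s a s') (hP1 : ∀ s a, ∑ s', P s a s' = 1)
    (μ : S → A → ℝ) (hμ0 : ∀ s a, 0 ≤ μ s a) (hμ1 : ∀ s, ∑ a, μ s a = 1)
    (Qst : S → Fin (B + 1) → A → ℝ) (hQst : TCB γ r P μ Qst = Qst)
    (Qmu : S → A → ℝ)
    (hQmu : ∀ s a, Qmu s a = r s a + γ * ∑ s', P s a s' * expct (μ s') (Qmu s'))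
    (Qopt : S → A → ℝ)
    (hQopt : ∀ s a, Qopt s a = r s a + γ * ∑ s', P s a s' * amax (Qopt s')) :
    ∀ (s : S) (a : A) (b : Fin (B + 1)), Qmu s a ≤ Qst s b a ∧ Qst s b a ≤ Qopt s a := by
  intro s a b
  have hlower := nonpos_of_forall_le_mul hγ1
    (u := fun x : S × Fin (B + 1) × A => Qmu x.1 x.2.2 - Qst x.1 x.2.1 x.2.2)
    (fun c hc x => evaluation_sub_fixedPoint_le hγ0 hP0 hP1 hμ0 hμ1 hQst hQmu
      (fun s b a => hc (s, b, a)) x.1 x.2.1 x.2.2) (s, b, a)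
  have hupper := nonpos_of_forall_le_mul hγ1
    (u := fun x : S × Fin (B + 1) × A => Qst x.1 x.2.1 x.2.2 - Qopt x.1 x.2.2)
    (fun c hc x => fixedPoint_sub_optimal_le hγ0 hP0 hP1 hμ0 hμ1 hQst hQopt
      (fun s b a => hc (s, b, a)) x.1 x.2.1 x.2.2) (s, b, a)
  exact ⟨sub_nonpos.mp hlower, sub_nonpos.mp hupper⟩

theorem fixedPoint_sandwich {S A : Type*} [Fintype S] [Nonempty S] [Fintype A] [Nonempty A] {B : ℕ}
    (γ : ℝ) (hγ0 : 0 ≤ γ) (hγ1 : γ < 1)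
    (r : S → A → ℝ)
    (P : S → A → S → ℝ) (hP0 : ∀ s a s', 0 ≤ P s a s') (hP1 : ∀ s a, ∑ s', P s a s' = 1)
    (μ : S → A → ℝ) (hμ0 : ∀ s a, 0 ≤ μ s a) (hμ1 : ∀ s, ∑ a, μ s a = 1)
    (Qst : S → Fin (B + 1) → A → ℝ) (hQst : TCB γ r P μ Qst = Qst)
    (Qmu : S → A → ℝ)
    (hQmu : ∀ s a, Qmu s a = r s a + γ * ∑ s', P s a s' * expct (μ s') (Qmu s'))
    (Qopt : S → A → ℝ)
    (hQopt : ∀ s a, Qopt s a = r s a + γ * ∑ s', P s a s' * amax (Qopt s')) :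
    ∀ (s : S) (a : A) (b : Fin (B + 1)), Qmu s a ≤ Qst s b a ∧ Qst s b a ≤ Qopt s a :=
  fixedPoint_sandwich_general γ hγ0 hγ1 r P hP0 hP1 μ hμ0 hμ1 Qst hQst Qmu hQmu Qopt hQopt
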